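/- Let R be a Noetherian ring of prime characteristic p > 0 and let x_1,…,x_k be a sequence of elements of R that is a regular sequence in every order. If the ideal (x_1,…,x_k) is Frobenius closed, then the ideal (x_1^{n_1},…,x_k^{n_k}) is Frobenius closed for all integers n_1,…,n_k ≥ 1. -/

import Mathlib

/-!
Preliminary definitions for formalizing statements about `F`-injectivity and Frobenius
closure of ideals in Noetherian rings of prime characteristic `p > 0`.
-/

open CategoryTheory IsLocalRing

noncomputable section

/-- `F_* R`: the ring `R` viewed as a module over itself via the Frobenius
endomorphism `x ↦ x ^ p`. -/
def FrobeniusRestriction (p : ℕ) (R : Type) : Type := R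

instance (p : ℕ) (R : Type) [CommRing R] : AddCommGroup (FrobeniusRestriction p R) :=
  inferInstanceAs (AddCommGroup R)

instance (p : ℕ) [Fact p.Prime] (R : Type) [CommRing R] [CharP R p] :
    Module R (FrobeniusRestriction p R) :=
  Module.compHom R (frobenius R p)

/-- The Frobenius `R → F_* R`, `x ↦ x ^ p`, as a map of `R`-modules. -/
def frobeniusLinearMap (p : ℕ) [Fact p.Prime] (R : Type) [CommRing R] [CharP R p] :
    R →ₗ[R] FrobeniusRestriction p R where
  toFun x := x ^ p
  map_add' x y := add_pow_char x y p
  map_smul' r x := by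
    show (r * x) ^ p = frobenius R p r * x ^ p
    rw [frobenius_def, mul_pow]

/-- The natural Frobenius action on the local cohomology module `H^i_I(R)` is injective.
This is formalized as the injectivity of the map `H^i_I(R) → H^i_I(F_* R)` induced by the
Frobenius `R → F_* R`; it differs from the classical Frobenius action on `H^i_I(R)` only by
composition with the canonical isomorphism `H^i_I(F_* R) ≅ F_* H^i_{I^{[p]}}(R) ≅ F_* H^i_I(R)`,
hence its injectivity is equivalent to the injectivity of the classical Frobenius action. -/
def FrobeniusActionInjective (p : ℕ) [Fact p.Prime] (R : Type) [CommRing R] [CharP R p]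
    (I : Ideal R) (i : ℕ) : Prop :=
  Function.Injective
    ((localCohomology I i).map (ModuleCat.ofHom (frobeniusLinearMap p R)))

/-- A local ring of prime characteristic `p` is `F`-injective if the natural Frobenius
action on `H^i_m(R)` is injective for all `i ≥ 0`. -/
def IsFInjective (p : ℕ) [Fact p.Prime] (R : Type) [CommRing R] [IsLocalRing R] [CharP R p] :
    Prop :=
  ∀ i : ℕ, FrobeniusActionInjective p R (maximalIdeal R) i

/-- `R` is `F`-pure: the Frobenius `R → F_* R` is a pure map of `R`-modules, i.e. it stays
injective after tensoring with an arbitrary `R`-module `M`. -/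
def IsFPure (p : ℕ) [Fact p.Prime] (R : Type) [CommRing R] [CharP R p] : Prop :=
  ∀ (M : Type) [AddCommGroup M] [Module R M],
    Function.Injective (TensorProduct.map (frobeniusLinearMap p R) (LinearMap.id (M := M)))

/-- `R` is `F`-finite: `R` is a finitely generated module over itself via the Frobenius
endomorphism. -/
def IsFFinite (p : ℕ) [Fact p.Prime] (R : Type) [CommRing R] [CharP R p] : Prop :=
  RingHom.Finite (frobenius R p)

/-- The ideal `I^{[q]}` generated by the `q`-th powers of the elements of `I`. -/
def idealFrobPow {R : Type} [CommRing R] (I : Ideal R) (q : ℕ) : Ideal R :=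
  Ideal.span ((fun a => a ^ q) '' (I : Set R))

/-- The Frobenius closure `I^F = {u : u ^ (p ^ e) ∈ I^{[p ^ e]} for some e ≥ 0}` of an ideal `I`,
as a subset of `R` (in characteristic `p > 0` this subset is itself an ideal). -/
def frobeniusClosure (p : ℕ) {R : Type} [CommRing R] (I : Ideal R) : Set R :=
  {u | ∃ e : ℕ, u ^ p ^ e ∈ idealFrobPow I (p ^ e)}

/-- An ideal `I` is Frobenius closed if `I^F = I`, equivalently `I^F ⊆ I`. -/
def IsFrobeniusClosed (p : ℕ) {R : Type} [CommRing R] (I : Ideal R) : Prop :=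
  frobeniusClosure p I ⊆ I

/-- The length `ℓ_R(M)` of a module, expressed as the Krull dimension of its lattice of
submodules (the supremum of the lengths of chains of submodules). -/
def moduleLength (R M : Type) [CommRing R] [AddCommGroup M] [Module R M] : WithBot ℕ∞ :=
  Order.krullDim (Submodule R M)

/-- A system of parameters of a local ring `R`: if `R` has Krull dimension `d`, it is a
sequence of `d` elements of the maximal ideal generating an `m`-primary ideal. -/
def IsSystemOfParameters (R : Type) [CommRing R] [IsLocalRing R] {d : ℕ}
    (x : Fin d → R) : Prop :=
  ringKrullDim R = d ∧ (∀ i, x i ∈ maximalIdeal R) ∧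
    (Ideal.span (Set.range x)).radical = maximalIdeal R

/-- The ideal `(x_1, …, x_j)` generated by the first `j` elements of a finite sequence. -/
def firstIdeal {R : Type} [CommRing R] {s : ℕ} (x : Fin s → R) (j : ℕ) : Ideal R :=
  Ideal.span {y | ∃ i : Fin s, (i : ℕ) < j ∧ x i = y}

/-- `x_1, …, x_s` is a filter regular sequence on `M`: each `x_i` lies in the maximal ideal
and lies outside every associated prime of `M/(x_1,…,x_{i-1})M` other than the maximal ideal. -/
def IsFilterRegular {R : Type} [CommRing R] [IsLocalRing R] (M : Type) [AddCommGroup M]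
    [Module R M] {s : ℕ} (x : Fin s → R) : Prop :=
  (∀ i, x i ∈ maximalIdeal R) ∧
    ∀ i : Fin s, ∀ P ∈ associatedPrimes R (M ⧸ (firstIdeal x (i : ℕ) • ⊤ : Submodule R M)),
      P ≠ maximalIdeal R → x i ∉ P

/-- The `i`-th local cohomology `H^i_m(M)` of the `R`-module `M` with support in the
maximal ideal. -/
def Hm (R : Type) [CommRing R] [IsLocalRing R] (M : Type) [AddCommGroup M] [Module R M]
    (i : ℕ) : ModuleCat R :=
  (localCohomology (maximalIdeal R) i).obj (ModuleCat.of R M)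

/-- The finiteness dimension `f_m(M) = inf { i : H^i_m(M) is not finitely generated }`,
an element of `ℕ∞` (the infimum of the empty set being `∞`). -/
def finitenessDimension (R : Type) [CommRing R] [IsLocalRing R] (M : Type) [AddCommGroup M]
    [Module R M] : ℕ∞ :=
  sInf ((↑) '' {i : ℕ | ¬ Module.Finite R (Hm R M i)})

/-- A sequence `x_1,…,x_s` is a standard sequence of `M` if it is a filter regular sequence
on `M` with `s ≤ f_m(M)` and `(x_1,…,x_s) · H^i_m(M/(x_1,…,x_j)M) = 0` for all `i + j < s`.
This definition records only the annihilation condition; the filter regularity and the bound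
`s ≤ f_m(M)` are carried separately as hypotheses. -/
def IsStandardSequence (R : Type) [CommRing R] [IsLocalRing R] (M : Type) [AddCommGroup M]
    [Module R M] {s : ℕ} (x : Fin s → R) : Prop :=
  ∀ i j : ℕ, i + j < s → ∀ r ∈ Ideal.span (Set.range x),
    ∀ y : Hm R (M ⧸ (firstIdeal x j • ⊤ : Submodule R M)) i, r • y = 0

/-- The limit closure `(x_1,…,x_t)^lim = ⋃_{n>0} ((x_1^{n+1},…,x_t^{n+1}) :_R (x_1⋯x_t)^n)`
of a sequence, as a subset of `R` (this subset is itself an ideal); for `t = 0` it is `(0)`. -/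
def limitClosure {R : Type} [CommRing R] {t : ℕ} (x : Fin t → R) : Set R :=
  {a | ∃ n : ℕ, 0 < n ∧ a * (∏ i, x i) ^ n ∈ Ideal.span (Set.range fun i => x i ^ (n + 1))}

instance (p : ℕ) [Fact p.Prime] (R : Type) [CommRing R] [CharP R p] (S : Submonoid R)
    [Nontrivial (Localization S)] : CharP (Localization S) p :=
  (CharP.charP_iff_prime_eq_zero Fact.out).mpr (by
    rw [← map_natCast (algebraMap R (Localization S)) p, CharP.cast_eq_zero, map_zero])

/-!
Induct on `∑ nᵢ`. If some exponent is `b + 2`, let `r` be that `xᵢ` and `J` the ideal of the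
other powers; by induction `(r) + J` and `(r^{b+1}) + J` are Frobenius closed. If
`u^q ∈ ((r^{b+2}) + J)^{[q]}`, then `u = c r^{b+1} + j` with `j ∈ J`, so
`c^q r^{(b+1)q} ∈ (r^{(b+2)q}) + J^{[q]}`. As `r` is a nonzerodivisor modulo `J^{[q]}`, the factor
`r^{(b+1)q}` cancels: `c^q ∈ ((r) + J)^{[q]}`, hence `c ∈ (r) + J` and `u ∈ (r^{b+2}) + J`.
That `xᵢ` is a nonzerodivisor modulo any ideal generated by powers of the other `xⱼ` follows from
regularity in every order by raising one generator to a power at a time.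
-/

open Ideal

section FrobeniusPower

variable {R : Type} [CommRing R]

lemma idealFrobPow_mono {I J : Ideal R} (h : I ≤ J) (q : ℕ) :
    idealFrobPow I q ≤ idealFrobPow J q :=
  span_mono (Set.image_mono h)

lemma frobeniusClosure_mono (p : ℕ) {I J : Ideal R} (h : I ≤ J) :
    frobeniusClosure p I ⊆ frobeniusClosure p J :=
  fun _ ⟨e, he⟩ => ⟨e, idealFrobPow_mono h _ he⟩

variable (p : ℕ) [Fact p.Prime] [CharP R p]

lemma idealFrobPow_eq_map (I : Ideal R) (e : ℕ) :
    idealFrobPow I (p ^ e) = I.map (iterateFrobenius R p e) :=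
  rfl

lemma idealFrobPow_span (s : Set R) (e : ℕ) :
    idealFrobPow (span s) (p ^ e) = span ((· ^ p ^ e) '' s) := by
  rw [idealFrobPow_eq_map, map_span]
  rfl

lemma idealFrobPow_span_singleton_sup (a : R) (I : Ideal R) (e : ℕ) :
    idealFrobPow (span {a} ⊔ I) (p ^ e) = span {a ^ p ^ e} ⊔ idealFrobPow I (p ^ e) := by
  rw [idealFrobPow_eq_map, Ideal.map_sup, ← idealFrobPow_eq_map, ← idealFrobPow_eq_map,
    idealFrobPow_span, Set.image_singleton]

end FrobeniusPower

section Regular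

variable {R : Type} [CommRing R]

lemma isSMulRegular_quotient_iff_mem_of_mul_mem {J : Ideal R} {y : R} :
    IsSMulRegular (R ⧸ J) y ↔ ∀ z, y * z ∈ J → z ∈ J :=
  isSMulRegular_quotient_iff_mem_of_smul_mem J y

lemma IsSMulRegular.mem_of_mul_mem_quotient {J : Ideal R} {r z : R}
    (hr : IsSMulRegular (R ⧸ J) r) (h : z * r ∈ J) : z ∈ J :=
  mem_of_isSMulRegular_quotient_of_smul_mem hr (by rwa [smul_eq_mul, mul_comm])

lemma IsSMulRegular.mem_span_pow_sup_of_mul_pow_mem {J : Ideal R} {r z : R}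
    (hr : IsSMulRegular (R ⧸ J) r) {a c : ℕ} (h : z * r ^ a ∈ span {r ^ (a + c)} ⊔ J) :
    z ∈ span {r ^ c} ⊔ J := by
  obtain ⟨d, j, hj, hdj⟩ := mem_span_singleton_sup.mp h
  have : (z - d * r ^ c) * r ^ a ∈ J := by
    convert hj using 1
    linear_combination -hdj
  exact mem_span_singleton_sup.mpr ⟨d, _, (hr.pow a).mem_of_mul_mem_quotient this, by ring⟩

lemma isSMulRegular_quotient_span_mul_sup {J : Ideal R} {a b y : R}
    (ha : IsSMulRegular (R ⧸ J) a) (hya : IsSMulRegular (R ⧸ span {a} ⊔ J) y)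
    (hyb : IsSMulRegular (R ⧸ span {b} ⊔ J) y) : IsSMulRegular (R ⧸ span {a * b} ⊔ J) y := by
  rw [isSMulRegular_quotient_iff_mem_of_mul_mem] at hya hyb ⊢
  intro z hz
  have hab : span {a * b} ⊔ J ≤ span {a} ⊔ J :=
    sup_le_sup_right (span_singleton_le_span_singleton.mpr (dvd_mul_right a b)) J
  obtain ⟨c, j, hj, rfl⟩ := mem_span_singleton_sup.mp (hya z (hab hz))
  obtain ⟨d, j', hj', hd⟩ := mem_span_singleton_sup.mp hz
  have hyc : y * c ∈ span {b} ⊔ J := by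
    refine mem_span_singleton_sup.mpr ⟨d, y * c - d * b, ?_, by ring⟩
    refine ha.mem_of_mul_mem_quotient ?_
    convert J.sub_mem hj' (J.mul_mem_left y hj) using 1
    linear_combination -hd
  obtain ⟨e, j'', hj'', rfl⟩ := mem_span_singleton_sup.mp (hyb c hyc)
  exact mem_span_singleton_sup.mpr ⟨e, j'' * a + j, J.add_mem (J.mul_mem_right a hj'') hj, by ring⟩

lemma isSMulRegular_quotient_span_pow_sup {J : Ideal R} {a y : R}
    (ha : IsSMulRegular (R ⧸ J) a) (hya : IsSMulRegular (R ⧸ span {a} ⊔ J) y) (k : ℕ) :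
    IsSMulRegular (R ⧸ span {a ^ k} ⊔ J) y := by
  induction k with
  | zero =>
    rw [isSMulRegular_quotient_iff_mem_of_mul_mem]
    simp
  | succ k ih => rw [pow_succ']; exact isSMulRegular_quotient_span_mul_sup ha hya ih

end Regular

section RegularSequence

variable {R : Type} [CommRing R] {k : ℕ} {x : Fin k → R}

lemma isSMulRegular_quotient_span_image_of_perm
    (hreg : ∀ l : List R, l.Perm (List.ofFn x) → RingTheory.Sequence.IsRegular R l)
    {U : Finset (Fin k)} {i : Fin k} (hi : i ∉ U) :
    IsSMulRegular (R ⧸ span (x '' U)) (x i) := by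
  classical
  have hperm : (U.toList ++ i :: (insert i U)ᶜ.toList).Perm (List.finRange k) := by
    refine (List.perm_ext_iff_of_nodup ?_ (List.nodup_finRange k)).mpr fun j => ?_
    · simp only [List.nodup_append, List.nodup_cons, Finset.nodup_toList, Finset.mem_toList,
        Finset.mem_compl, Finset.mem_insert, List.mem_cons]
      grind
    · by_cases hj : j = i <;> simp [hj, em]
  have hx := (hreg _ (List.ofFn_eq_map ▸ hperm.map x)).toIsWeaklyRegular
  rw [List.map_append, List.map_cons, RingTheory.Sequence.isWeaklyRegular_append_iff,
    RingTheory.Sequence.isWeaklyRegular_cons_iff] at hx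
  have hU : (ofList (U.toList.map x) • ⊤ : Submodule R R) = span (x '' U) := by
    rw [smul_eq_mul, mul_top, ofList]
    congr 1
    ext
    simp [eq_comm]
  rw [hU] at hx
  exact hx.2.1

/-- The generators indexed by `U` keep exponent `1`: the induction step on `S` moves `x j`
into `U`. -/
lemma isSMulRegular_quotient_span_image_pow_sup
    (hreg : ∀ l : List R, l.Perm (List.ofFn x) → RingTheory.Sequence.IsRegular R l)
    (m : Fin k → ℕ) {S U : Finset (Fin k)} (hSU : Disjoint S U) {i : Fin k} (hiS : i ∉ S)
    (hiU : i ∉ U) :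
    IsSMulRegular (R ⧸ span ((fun j => x j ^ m j) '' S) ⊔ span (x '' U)) (x i) := by
  classical
  induction S using Finset.induction_on generalizing U i with
  | empty =>
    rw [Finset.coe_empty, Set.image_empty, span_empty, bot_sup_eq]
    exact isSMulRegular_quotient_span_image_of_perm hreg hiU
  | insert j S hjS ih =>
    rw [Finset.coe_insert, Set.image_insert_eq, span_insert, sup_assoc]
    have hjU : j ∉ U := Finset.disjoint_left.mp hSU (Finset.mem_insert_self j S)
    have hSU' : Disjoint S U := hSU.mono_left (Finset.subset_insert j S)
    refine isSMulRegular_quotient_span_pow_sup (ih hSU' hjS hjU) ?_ _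
    have hij : i ≠ j := fun h => hiS (h ▸ Finset.mem_insert_self j S)
    have := ih (U := insert j U) (Finset.disjoint_insert_right.mpr ⟨hjS, hSU'⟩)
      (fun h => hiS (Finset.mem_insert_of_mem h)) (by simp [hij, hiU])
    rwa [Finset.coe_insert, Set.image_insert_eq, span_insert, sup_left_comm] at this

end RegularSequence

section FrobeniusClosed

variable {R : Type} [CommRing R] (p : ℕ) [Fact p.Prime] [CharP R p]

theorem isFrobeniusClosed_span_pow_succ_sup {J : Ideal R} {r : R}
    (hr : ∀ e, IsSMulRegular (R ⧸ idealFrobPow J (p ^ e)) r)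
    (h1 : IsFrobeniusClosed p (span {r} ⊔ J)) {b : ℕ}
    (hb : IsFrobeniusClosed p (span {r ^ b} ⊔ J)) :
    IsFrobeniusClosed p (span {r ^ (b + 1)} ⊔ J) := by
  intro u hu
  have hle : span {r ^ (b + 1)} ⊔ J ≤ span {r ^ b} ⊔ J :=
    sup_le_sup_right (span_singleton_le_span_singleton.mpr (pow_dvd_pow r b.le_succ)) J
  obtain ⟨c, j, hj, rfl⟩ := mem_span_singleton_sup.mp (hb (frobeniusClosure_mono p hle hu))
  obtain ⟨e, he⟩ := hu
  rw [idealFrobPow_span_singleton_sup, pow_right_comm] at he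
  have hjq : j ^ p ^ e ∈ idealFrobPow J (p ^ e) := subset_span ⟨j, hj, rfl⟩
  have hc : c ∈ frobeniusClosure p (span {r} ⊔ J) := by
    refine ⟨e, ?_⟩
    rw [idealFrobPow_span_singleton_sup, ← pow_one (r ^ p ^ e)]
    refine ((hr e).pow (p ^ e)).mem_span_pow_sup_of_mul_pow_mem (a := b) ?_
    convert sub_mem he (mem_sup_right hjq) using 1
    rw [add_pow_char_pow, mul_pow, pow_right_comm]
    ring
  obtain ⟨d, j', hj', rfl⟩ := mem_span_singleton_sup.mp (h1 hc)
  exact mem_span_singleton_sup.mpr ⟨d, j' * r ^ b + j, add_mem (J.mul_mem_right _ hj') hj, by ring⟩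

end FrobeniusClosed

section PowerIdeals

variable {R : Type} [CommRing R]

lemma span_range_pow_update {ι : Type} [DecidableEq ι] (x : ι → R) (n : ι → ℕ) (i₀ : ι)
    (c : ℕ) :
    span (Set.range fun i => x i ^ Function.update n i₀ c i) =
      span {x i₀ ^ c} ⊔ span ((fun i => x i ^ n i) '' {i₀}ᶜ) := by
  rw [← Set.image_univ, ← Set.union_compl_self {i₀}, Set.image_union, Set.image_singleton,
    span_union, Function.update_self]
  congr 2
  exact Set.image_congr fun i hi => by rw [Function.update_of_ne hi]

variable (p : ℕ) [Fact p.Prime] [CharP R p] {k : ℕ} {x : Fin k → R}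

lemma isSMulRegular_quotient_idealFrobPow_span_pow_compl
    (hreg : ∀ l : List R, l.Perm (List.ofFn x) → RingTheory.Sequence.IsRegular R l)
    (n : Fin k → ℕ) (i : Fin k) (e : ℕ) :
    IsSMulRegular (R ⧸ idealFrobPow (span ((fun j => x j ^ n j) '' {i}ᶜ)) (p ^ e)) (x i) := by
  have h := isSMulRegular_quotient_span_image_pow_sup hreg (fun j => n j * p ^ e)
    (Finset.disjoint_empty_right {i}ᶜ) (i := i) (by simp) (by simp)
  rw [Finset.coe_empty, Set.image_empty, span_empty, sup_bot_eq, Finset.coe_compl,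
    Finset.coe_singleton] at h
  rw [idealFrobPow_span, Set.image_image]
  rwa [funext fun j => pow_mul (x j) (n j) (p ^ e)] at h

theorem isFrobeniusClosed_span_range_pow
    (hreg : ∀ l : List R, l.Perm (List.ofFn x) → RingTheory.Sequence.IsRegular R l)
    (hclosed : IsFrobeniusClosed p (span (Set.range x))) (n : Fin k → ℕ) (hn : ∀ i, 1 ≤ n i) :
    IsFrobeniusClosed p (span (Set.range fun i => x i ^ n i)) := by
  induction hN : ∑ i, n i using Nat.strong_induction_on generalizing n with
  | _ N ih =>
  by_cases hall : ∀ i, n i = 1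
  · simpa [hall] using hclosed
  push Not at hall
  obtain ⟨i₀, hi₀⟩ := hall
  obtain ⟨b, hb⟩ : ∃ b, n i₀ = b + 2 := ⟨n i₀ - 2, by have := hn i₀; omega⟩
  have hlower : ∀ c, 1 ≤ c → c < n i₀ → IsFrobeniusClosed p
      (span {x i₀ ^ c} ⊔ span ((fun i => x i ^ n i) '' {i₀}ᶜ)) := by
    intro c hc hcn
    rw [← span_range_pow_update]
    refine ih _ ?_ _ (fun i => ?_) rfl
    · have := Finset.sum_update_of_mem (Finset.mem_univ i₀) n c
      have := Finset.sum_eq_add_sum_sdiff_singleton_of_mem (Finset.mem_univ i₀) n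
      omega
    · rcases eq_or_ne i i₀ with rfl | h
      · simpa using hc
      · simpa [h] using hn i
  have h1 := hlower 1 le_rfl (by omega)
  rw [pow_one] at h1
  rw [← Function.update_eq_self i₀ n, span_range_pow_update, hb]
  exact isFrobeniusClosed_span_pow_succ_sup p
    (isSMulRegular_quotient_idealFrobPow_span_pow_compl p hreg n i₀) h1
    (hlower (b + 1) (by omega) (by omega))

end PowerIdeals

theorem statement_1_general (p : ℕ) [Fact p.Prime] (R : Type) [CommRing R]
    [CharP R p] {k : ℕ} (x : Fin k → R)
    (hreg : ∀ l : List R, l.Perm (List.ofFn x) → RingTheory.Sequence.IsRegular R l)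
    (hclosed : IsFrobeniusClosed p (Ideal.span (Set.range x)))
    (n : Fin k → ℕ) (hn : ∀ i, 1 ≤ n i) :
    IsFrobeniusClosed p (Ideal.span (Set.range fun i => x i ^ n i)) :=
  isFrobeniusClosed_span_range_pow p hreg hclosed n hn

/-- If `x_1, …, x_k` is a regular sequence in every order in a Noetherian ring
of prime characteristic `p > 0` and `(x_1, …, x_k)` is Frobenius closed, then
`(x_1^{n_1}, …, x_k^{n_k})` is Frobenius closed for all `n_1, …, n_k ≥ 1`. -/
theorem statement_1 (p : ℕ) [Fact p.Prime] (R : Type) [CommRing R] [IsNoetherianRing R]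
    [CharP R p] {k : ℕ} (x : Fin k → R)
    (hreg : ∀ l : List R, l.Perm (List.ofFn x) → RingTheory.Sequence.IsRegular R l)
    (hclosed : IsFrobeniusClosed p (Ideal.span (Set.range x)))
    (n : Fin k → ℕ) (hn : ∀ i, 1 ≤ n i) :
    IsFrobeniusClosed p (Ideal.span (Set.range fun i => x i ^ n i)) :=
  statement_1_general p R x hreg hclosed n hn
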